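/- arXiv:1504.01250 — 3 statements merged into one kernel-verified Lean document; each statement's English description precedes it below -/
import Mathlib

section
/- Let $H$ be a nonzero harmonic polynomial on $\mathbb{R}^3$ and let $A(x)=A_1x_1+A_2x_2+A_3x_3$ be a nonzero linear form. Then $H$ is not divisible (in the polynomial ring) by $A^2$. -/
/-!
If `A ^ k` divides a harmonic `H` with `k ≥ 2`, write `H = A ^ k * p`. Since `∇A = a` is constant,
`Δ H ≡ k (k - 1) |a|² A ^ (k - 2) p` modulo `A ^ (k - 1)`, so `Δ H = 0` and `|a|² ≠ 0` force
`A ∣ p`, i.e. `A ^ (k + 1) ∣ H`. Thus every power of the non-unit `A` divides `H`, so `H = 0`.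
-/

open MvPolynomial

namespace MvPolynomial

variable {σ R : Type*}

noncomputable def laplacian [Fintype σ] [CommSemiring R] (p : MvPolynomial σ R) :
    MvPolynomial σ R :=
  ∑ i, pderiv i (pderiv i p)

theorem pderiv_pow_of_pderiv_eq_C [CommSemiring R] {A : MvPolynomial σ R} {i : σ} {c : R}
    (hA : pderiv i A = C c) (n : ℕ) :
    pderiv i (A ^ (n + 1)) = C ((n + 1) * c) * A ^ n := by
  rw [Derivation.leibniz_pow, hA, add_tsub_cancel_right, nsmul_eq_mul, smul_eq_mul]
  simp only [map_mul, map_add, map_natCast, map_one]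
  push_cast
  ring

theorem pow_succ_dvd_pderiv_pderiv_pow_mul_sub [CommRing R] {A : MvPolynomial σ R} {i : σ}
    {c : R} (hA : pderiv i A = C c) (n : ℕ) (p : MvPolynomial σ R) :
    A ^ (n + 1) ∣
      pderiv i (pderiv i (A ^ (n + 2) * p)) - C ((n + 2) * (n + 1) * c ^ 2) * A ^ n * p := by
  refine ⟨C (2 * (n + 2) * c) * pderiv i p + A * pderiv i (pderiv i p), ?_⟩
  have h₁ : pderiv i (A ^ (n + 2)) = C ((n + 2) * c) * A ^ (n + 1) := by
    rw [pderiv_pow_of_pderiv_eq_C hA (n + 1)]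
    push_cast
    ring_nf
  simp only [pderiv_mul, h₁, pderiv_pow_of_pderiv_eq_C hA, pderiv_C, map_add, zero_mul, zero_add]
  simp only [map_mul, map_add, map_natCast, map_one, map_pow, map_ofNat]
  ring

theorem pow_succ_dvd_laplacian_pow_mul_sub [Fintype σ] [CommRing R] {A : MvPolynomial σ R}
    {a : σ → R} (hA : ∀ i, pderiv i A = C (a i)) (n : ℕ) (p : MvPolynomial σ R) :
    A ^ (n + 1) ∣
      laplacian (A ^ (n + 2) * p) - C ((n + 2) * (n + 1) * ∑ i, a i ^ 2) * A ^ n * p := by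
  rw [laplacian, Finset.mul_sum, map_sum, Finset.sum_mul, Finset.sum_mul, ← Finset.sum_sub_distrib]
  exact Finset.dvd_sum fun i _ ↦ pow_succ_dvd_pderiv_pderiv_pow_mul_sub (hA i) n p

theorem ne_C_of_pderiv_eq_C [CommSemiring R] {A : MvPolynomial σ R} {a : σ → R}
    (hA : ∀ i, pderiv i A = C (a i)) (ha : a ≠ 0) (k : R) : A ≠ C k := by
  rintro rfl
  exact ha <| _root_.funext fun i ↦ by simpa using (hA i).symm

section Field

variable [Fintype σ] {K : Type*} [Field K] [CharZero K] {A H : MvPolynomial σ K} {a : σ → K}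

theorem pow_succ_dvd_of_laplacian_eq_zero (hH : laplacian H = 0)
    (hA : ∀ i, pderiv i A = C (a i)) (ha : ∑ i, a i ^ 2 ≠ 0) (hA₀ : A ≠ 0) {n : ℕ}
    (hdvd : A ^ (n + 2) ∣ H) : A ^ (n + 3) ∣ H := by
  obtain ⟨p, rfl⟩ := hdvd
  have hn₂ : (n + 2 : K) ≠ 0 := by exact_mod_cast (n + 1).succ_ne_zero
  have hc : ((n + 2) * (n + 1) * ∑ i, a i ^ 2 : K) ≠ 0 :=
    mul_ne_zero (mul_ne_zero hn₂ n.cast_add_one_ne_zero) ha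
  have hdvd := pow_succ_dvd_laplacian_pow_mul_sub hA n p
  rw [hH, zero_sub, dvd_neg, pow_succ, mul_assoc, mul_left_comm,
    mul_dvd_mul_iff_left (pow_ne_zero n hA₀), (hc.isUnit.map C).dvd_mul_left] at hdvd
  rw [pow_succ]
  exact mul_dvd_mul_left _ hdvd

theorem eq_zero_of_laplacian_eq_zero_of_sq_dvd (hH : laplacian H = 0)
    (hA : ∀ i, pderiv i A = C (a i)) (ha : ∑ i, a i ^ 2 ≠ 0) (hdvd : A ^ 2 ∣ H) : H = 0 := by
  have ha₀ : a ≠ 0 := by rintro rfl; simp at ha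
  have hA₀ : A ≠ 0 := by simpa using ne_C_of_pderiv_eq_C hA ha₀ 0
  have hA_unit : ¬IsUnit A := fun hu ↦ by
    obtain ⟨k, -, rfl⟩ := isUnit_iff_eq_C_of_isReduced.mp hu
    exact ne_C_of_pderiv_eq_C hA ha₀ k rfl
  have hpow : ∀ n, A ^ (n + 2) ∣ H := fun n ↦ by
    induction n with
    | zero => exact hdvd
    | succ n ih => exact pow_succ_dvd_of_laplacian_eq_zero hH hA ha hA₀ ih
  by_contra hH₀
  refine FiniteMultiplicity.not_iff_forall.mpr (fun n ↦ ?_) (.of_not_isUnit hA_unit hH₀)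
  exact (pow_dvd_pow A (Nat.le_add_right n 2)).trans (hpow n)

end Field

end MvPolynomial

/-- A nonzero harmonic polynomial on ℝ³ is not divisible by the square of a
nonzero linear form. -/
theorem stmt_2 (H : MvPolynomial (Fin 3) ℝ) (hH : H ≠ 0)
    (hharm : pderiv 0 (pderiv 0 H) + pderiv 1 (pderiv 1 H) + pderiv 2 (pderiv 2 H) = 0)
    (A₁ A₂ A₃ : ℝ) (hA : ¬(A₁ = 0 ∧ A₂ = 0 ∧ A₃ = 0)) :
    ¬ ((C A₁ * X 0 + C A₂ * X 1 + C A₃ * X 2) ^ 2 ∣ H) := by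
  refine fun hdvd ↦ hH (eq_zero_of_laplacian_eq_zero_of_sq_dvd (a := ![A₁, A₂, A₃]) ?_ ?_ ?_ hdvd)
  · simpa [laplacian, Fin.sum_univ_three] using hharm
  · intro i
    fin_cases i <;> simp [pderiv_X]
  · simp only [Fin.sum_univ_three, Matrix.cons_val]
    contrapose! hA
    refine ⟨?_, ?_, ?_⟩ <;> nlinarith [sq_nonneg A₁, sq_nonneg A₂, sq_nonneg A₃]
end

section
/- Let $H$ be a nonzero real harmonic polynomial on $\mathbb{R}^d$ and let $P$ be a real polynomial with $P(x)\ge 0$ for all $x\in\mathbb{R}^d$ and $P$ nonconstant. Then $P$ does not divide $H$ in $\mathbb{R}[x_1,\dots,x_d]$. -/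
open MeasureTheory Real Filter Topology

noncomputable def gw (t : ℝ) : ℝ := Real.exp (-t^2/2)

lemma gw_pos (t : ℝ) : 0 < gw t := Real.exp_pos _

lemma integrable_pow_mul_gw (k : ℕ) : Integrable (fun t : ℝ => t^k * gw t) := by
  have h := integrable_rpow_mul_exp_neg_mul_sq (b := 1/2) (by norm_num) (s := k)
    (neg_one_lt_zero.trans_le (Nat.cast_nonneg k))
  simp only [Real.rpow_natCast] at h
  refine h.congr ?_
  filter_upwards with t
  unfold gw
  ring_nf

lemma integrable_poly_mul_gw (p : Polynomial ℝ) :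
    Integrable (fun t : ℝ => p.eval t * gw t) := by
  have : (fun t : ℝ => p.eval t * gw t)
      = fun t => ∑ k ∈ Finset.range (p.natDegree + 1), p.coeff k * (t ^ k * gw t) := by
    funext t
    rw [Polynomial.eval_eq_sum_range, Finset.sum_mul]
    congr 1; funext k; ring
  rw [this]
  exact integrable_finset_sum _ (fun k _ => (integrable_pow_mul_gw k).const_mul _)

lemma tendsto_poly_mul_gw_atTop (p : Polynomial ℝ) :
    Tendsto (fun t : ℝ => p.eval t * gw t) atTop (𝓝 0) := by
  have base : ∀ k : ℕ, Tendsto (fun t : ℝ => t ^ k * gw t) atTop (𝓝 0) := by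
    intro k
    have h := rpow_mul_exp_neg_mul_sq_isLittleO_exp_neg (b := 1/2) (by norm_num) (k : ℝ)
    simp only [Real.rpow_natCast] at h
    have h4 : Tendsto (fun x : ℝ => -(1/2) * x) atTop atBot := by
      have : Tendsto (fun x : ℝ => (1/2 : ℝ) * x) atTop atTop :=
        Tendsto.const_mul_atTop (by norm_num) tendsto_id
      have := tendsto_neg_atTop_atBot.comp this
      refine this.congr (fun x => by simp [Function.comp])
    have h2 : Tendsto (fun x : ℝ => Real.exp (-(1/2) * x)) atTop (𝓝 0) :=
      Real.tendsto_exp_atBot.comp h4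
    have := h.isBigO.trans_tendsto h2
    refine this.congr ?_
    intro t
    unfold gw; ring_nf
  have : (fun t : ℝ => p.eval t * gw t)
      = fun t => ∑ k ∈ Finset.range (p.natDegree + 1), p.coeff k * (t ^ k * gw t) := by
    funext t
    rw [Polynomial.eval_eq_sum_range, Finset.sum_mul]
    congr 1; funext k; ring
  rw [this]
  have : Tendsto (fun t : ℝ => ∑ k ∈ Finset.range (p.natDegree + 1), p.coeff k * (t ^ k * gw t))
      atTop (𝓝 (∑ k ∈ Finset.range (p.natDegree + 1), p.coeff k * 0)) :=
    tendsto_finset_sum _ (fun k _ => (base k).const_mul _)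
  simpa using this

lemma tendsto_poly_mul_gw_atBot (p : Polynomial ℝ) :
    Tendsto (fun t : ℝ => p.eval t * gw t) atBot (𝓝 0) := by
  have h := (tendsto_poly_mul_gw_atTop (p.comp (-Polynomial.X))).comp tendsto_neg_atBot_atTop
  refine h.congr ?_
  intro t
  simp only [Function.comp_apply, Polynomial.eval_comp, Polynomial.eval_neg, Polynomial.eval_X]
  unfold gw
  ring_nf

lemma steinOne (p : Polynomial ℝ) :
    ∫ t : ℝ, (t * p.eval t) * gw t = ∫ t : ℝ, (Polynomial.derivative p).eval t * gw t := by
  set q : Polynomial ℝ := Polynomial.derivative p - Polynomial.X * p with hq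
  have hderiv : ∀ t : ℝ, HasDerivAt (fun t : ℝ => p.eval t * gw t) (q.eval t * gw t) t := by
    intro t
    have h1 : HasDerivAt (fun t : ℝ => p.eval t) ((Polynomial.derivative p).eval t) t :=
      p.hasDerivAt t
    have h2 : HasDerivAt (fun t : ℝ => -t^2/2) (-t) t := by
      have := ((hasDerivAt_pow 2 t).neg).div_const 2
      simpa using this.congr_deriv (by ring)
    have h3 : HasDerivAt gw (gw t * (-t)) t := by
      have := h2.exp
      unfold gw
      simpa using this
    have := h1.mul h3
    refine this.congr_deriv ?_
    simp [hq]
    ring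
  have hint : Integrable (fun t : ℝ => q.eval t * gw t) := integrable_poly_mul_gw q
  have hIoi : ∫ t in Set.Ioi (0:ℝ), q.eval t * gw t = 0 - (p.eval 0 * gw 0) := by
    refine integral_Ioi_of_hasDerivAt_of_tendsto' (fun x _ => hderiv x) hint.integrableOn ?_
    exact tendsto_poly_mul_gw_atTop p
  have hIic : ∫ t in Set.Iic (0:ℝ), q.eval t * gw t = (p.eval 0 * gw 0) - 0 := by
    refine integral_Iic_of_hasDerivAt_of_tendsto' (fun x _ => hderiv x) hint.integrableOn ?_
    exact tendsto_poly_mul_gw_atBot p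
  have htot : ∫ t : ℝ, q.eval t * gw t = 0 := by
    rw [← intervalIntegral.integral_Iic_add_Ioi (μ := volume) hint.integrableOn hint.integrableOn, hIoi, hIic]
    ring
  have hsplit : ∀ t : ℝ, q.eval t * gw t
      = (Polynomial.derivative p).eval t * gw t - (t * p.eval t) * gw t := by
    intro t; simp [hq]; ring
  rw [show (fun t : ℝ => q.eval t * gw t) = fun t =>
      (Polynomial.derivative p).eval t * gw t - (t * p.eval t) * gw t from funext hsplit] at htot
  have h1 : Integrable (fun t : ℝ => (Polynomial.derivative p).eval t * gw t) :=
    integrable_poly_mul_gw _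
  have h2 : Integrable (fun t : ℝ => (t * p.eval t) * gw t) := by
    have := integrable_poly_mul_gw (Polynomial.X * p)
    simpa using this
  rw [integral_sub h1 h2] at htot
  linarith
open MvPolynomial in
noncomputable def gwD {d : ℕ} (x : Fin d → ℝ) : ℝ := ∏ i, gw (x i)

open MvPolynomial in
noncomputable def EE {d : ℕ} (f : MvPolynomial (Fin d) ℝ) : ℝ :=
  ∫ x : Fin d → ℝ, MvPolynomial.eval x f * gwD x

namespace BC

open MvPolynomial

variable {d : ℕ}

lemma integrable_eval_mul_gwD (f : MvPolynomial (Fin d) ℝ) :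
    Integrable (fun x : Fin d → ℝ => eval x f * gwD x) := by
  have key : ∀ β : Fin d →₀ ℕ, Integrable
      (fun x : Fin d → ℝ => (∏ i, x i ^ β i) * gwD x) := by
    intro β
    have : (fun x : Fin d → ℝ => (∏ i, x i ^ β i) * gwD x)
        = fun x : Fin d → ℝ => ∏ i, (x i ^ β i * gw (x i)) := by
      funext x
      rw [Finset.prod_mul_distrib]
      rfl
    rw [this]
    exact MeasureTheory.Integrable.fintype_prod (f := fun i t => t ^ β i * gw t)
      (fun i => integrable_pow_mul_gw (β i))
  have hrepr : (fun x : Fin d → ℝ => eval x f * gwD x)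
      = fun x => ∑ β ∈ f.support, coeff β f * ((∏ i, x i ^ β i) * gwD x) := by
    funext x
    rw [eval_eq, Finset.sum_mul]
    congr 1
    funext β
    have : ∏ i ∈ β.support, x i ^ β i = ∏ i, x i ^ β i := by
      refine Finset.prod_subset (Finset.subset_univ _) ?_
      intro i _ hi
      rw [Finsupp.notMem_support_iff.mp hi, pow_zero]
    rw [this]
    ring
  rw [hrepr]
  exact MeasureTheory.integrable_finset_sum _ (fun β _ => (key β).const_mul _)

lemma EE_add (f g : MvPolynomial (Fin d) ℝ) : EE (f + g) = EE f + EE g := by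
  unfold EE
  rw [← MeasureTheory.integral_add (integrable_eval_mul_gwD f) (integrable_eval_mul_gwD g)]
  congr 1; funext x; rw [map_add]; ring

lemma EE_zero : EE (0 : MvPolynomial (Fin d) ℝ) = 0 := by
  unfold EE; simp

lemma EE_smul (c : ℝ) (f : MvPolynomial (Fin d) ℝ) : EE (MvPolynomial.C c * f) = c * EE f := by
  unfold EE
  rw [← MeasureTheory.integral_const_mul]
  congr 1; funext x; rw [map_mul, MvPolynomial.eval_C]; ring

lemma EE_sum {ι : Type*} (s : Finset ι) (f : ι → MvPolynomial (Fin d) ℝ) :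
    EE (∑ i ∈ s, f i) = ∑ i ∈ s, EE (f i) := by
  classical
  induction s using Finset.induction_on with
  | empty => simp [EE_zero]
  | insert _ _ h ih => rw [Finset.sum_insert h, EE_add, ih, Finset.sum_insert h]

/-- substitute variable i by `Polynomial.X` and other variables by constants -/
noncomputable def slice (i : Fin d) (x : Fin d → ℝ) :
    MvPolynomial (Fin d) ℝ →ₐ[ℝ] Polynomial ℝ :=
  aeval (fun j => if j = i then Polynomial.X else Polynomial.C (x j))

lemma slice_eval (i : Fin d) (x : Fin d → ℝ) (f : MvPolynomial (Fin d) ℝ) (t : ℝ) :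
    (slice i x f).eval t = eval (Function.update x i t) f := by
  induction f using MvPolynomial.induction_on with
  | C a => simp [slice]
  | add p q hp hq => simp [map_add, hp, hq]
  | mul_X p j hp =>
    rw [map_mul, map_mul, Polynomial.eval_mul, hp]
    congr 1
    by_cases h : j = i
    · subst h; simp [slice]
    · simp [slice, h, Function.update_of_ne h]

lemma slice_pderiv (i : Fin d) (x : Fin d → ℝ) (f : MvPolynomial (Fin d) ℝ) :
    slice i x (pderiv i f) = Polynomial.derivative (slice i x f) := by
  induction f using MvPolynomial.induction_on with
  | C a => simp [slice]
  | add p q hp hq => simp [map_add, hp, hq]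
  | mul_X p j hp =>
    by_cases h : j = i
    · subst h
      rw [pderiv_mul, pderiv_X_self]
      simp only [map_add, map_mul, map_one, hp, mul_one]
      have hX : slice j x (MvPolynomial.X j) = Polynomial.X := by simp [slice]
      rw [hX, Polynomial.derivative_mul, Polynomial.derivative_X, mul_one]
    · rw [pderiv_mul, pderiv_X_of_ne h]
      simp only [map_add, map_mul, map_zero, mul_zero, add_zero, hp]
      have hX : slice i x (MvPolynomial.X j) = Polynomial.C (x j) := by simp [slice, h]
      rw [hX, Polynomial.derivative_mul, Polynomial.derivative_C, mul_zero, add_zero]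

lemma stein {n : ℕ} (i : Fin (n+1)) (f : MvPolynomial (Fin (n+1)) ℝ) :
    EE (X i * f) = EE (pderiv i f) := by
  have mp := (MeasureTheory.measurePreserving_piFinSuccAbove
      (fun _ : Fin (n+1) => (MeasureTheory.volume : MeasureTheory.Measure ℝ)) i).symm
  have key : ∀ g : MvPolynomial (Fin (n+1)) ℝ,
      EE g = ∫ y : Fin n → ℝ, ∫ t : ℝ,
        eval (Function.update (Fin.insertNth (α := fun _ : Fin (n+1) => ℝ) i 0 y) i t) g
          * (gw t * ∏ j, gw (y j)) := by
    intro g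
    have hint : MeasureTheory.Integrable (fun x : Fin (n+1) → ℝ => eval x g * gwD x) :=
      integrable_eval_mul_gwD g
    unfold EE
    rw [MeasureTheory.volume_pi] at hint ⊢
    rw [← mp.integral_comp']
    have hint2 : MeasureTheory.Integrable
        (fun z : ℝ × (Fin n → ℝ) =>
          eval ((MeasurableEquiv.piFinSuccAbove (fun _ => ℝ) i).symm z) g
            * gwD ((MeasurableEquiv.piFinSuccAbove (fun _ => ℝ) i).symm z))
        ((MeasureTheory.volume : MeasureTheory.Measure ℝ).prod
          (MeasureTheory.Measure.pi fun _ : Fin n => (MeasureTheory.volume : MeasureTheory.Measure ℝ))) := by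
      rw [← mp.integrable_comp_emb (MeasurableEquiv.measurableEmbedding _)] at hint
      exact hint
    rw [MeasureTheory.integral_prod_symm _ hint2]
    congr 1
    funext y
    congr 1
    funext t
    have hins : (MeasurableEquiv.piFinSuccAbove (fun _ : Fin (n+1) => ℝ) i).symm (t, y)
        = Fin.insertNth (α := fun _ : Fin (n+1) => ℝ) i t y := rfl
    have hupd : Fin.insertNth (α := fun _ : Fin (n+1) => ℝ) i t y
        = Function.update (Fin.insertNth (α := fun _ : Fin (n+1) => ℝ) i 0 y) i t := by
      funext j
      by_cases h : j = i
      · subst h; simp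
      · rcases Fin.exists_succAbove_eq h with ⟨k, rfl⟩
        rw [Fin.insertNth_apply_succAbove, Function.update_of_ne (Fin.succAbove_ne i k),
          Fin.insertNth_apply_succAbove]
    have hgwD : gwD (Fin.insertNth (α := fun _ : Fin (n+1) => ℝ) i t y)
        = gw t * ∏ j, gw (y j) := by
      unfold gwD
      rw [Fin.prod_univ_succAbove
        (fun j => gw (Fin.insertNth (α := fun _ : Fin (n+1) => ℝ) i t y j)) i]
      simp
    rw [hins, hgwD, hupd]
  rw [key, key]
  congr 1
  funext y
  set xb : Fin (n+1) → ℝ := Fin.insertNth (α := fun _ : Fin (n+1) => ℝ) i 0 y with hxb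
  have inner : ∀ t : ℝ, eval (Function.update xb i t) (MvPolynomial.X i * f) * (gw t * ∏ j, gw (y j))
      = (t * (slice i xb f).eval t) * gw t * ∏ j, gw (y j) := by
    intro t
    rw [map_mul, slice_eval]
    simp [Function.update_self]
    ring
  have inner2 : ∀ t : ℝ, eval (Function.update xb i t) (pderiv i f) * (gw t * ∏ j, gw (y j))
      = ((Polynomial.derivative (slice i xb f)).eval t) * gw t * ∏ j, gw (y j) := by
    intro t
    rw [← slice_eval, slice_pderiv]
    ring
  simp only [inner, inner2]
  rw [show (fun t => t * (slice i xb f).eval t * gw t * ∏ j, gw (y j))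
      = fun t => (t * (slice i xb f).eval t * gw t) * ∏ j, gw (y j) from funext (fun t => by ring)]
  rw [MeasureTheory.integral_mul_const, MeasureTheory.integral_mul_const]
  rw [show (fun t => t * (slice i xb f).eval t * gw t)
      = fun t => (t * (slice i xb f).eval t) * gw t from funext (fun t => by ring)]
  rw [steinOne]

end BC
namespace BC

open MvPolynomial

variable {d : ℕ}

lemma finsupp_degree_eq_sum (β : Fin d →₀ ℕ) : β.degree = ∑ i, β i := by
  unfold Finsupp.degree
  refine Finset.sum_subset (Finset.subset_univ _) ?_
  intro i _ hi
  exact Finsupp.notMem_support_iff.mp hi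

lemma mem_support_degree {q : ℕ} {u : MvPolynomial (Fin d) ℝ} (hu : u.IsHomogeneous q)
    {β : Fin d →₀ ℕ} (hβ : β ∈ u.support) : β.degree = q := by
  by_contra h
  exact (mem_support_iff.mp hβ) (hu.coeff_eq_zero h)

lemma X_mul_pderiv_monomial (i : Fin d) (β : Fin d →₀ ℕ) (c : ℝ) :
    X i * pderiv i (monomial β c) = monomial β (c * β i) := by
  rw [pderiv_monomial]
  rw [show (X i : MvPolynomial (Fin d) ℝ) * monomial (β - Finsupp.single i 1) (c * β i)
      = X i ^ 1 * monomial (β - Finsupp.single i 1) (c * β i) from by rw [pow_one]]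
  rw [← monomial_single_add]
  by_cases h : β i = 0
  · rw [h]
    simp
  · have hidx : Finsupp.single i (1:ℕ) + (β - Finsupp.single i (1:ℕ)) = β := by
      ext j
      rw [Finsupp.add_apply, Finsupp.tsub_apply]
      rcases eq_or_ne j i with rfl | hne
      · simp only [Finsupp.single_eq_same]
        omega
      · rw [Finsupp.single_eq_of_ne' (Ne.symm hne)]
        omega
    rw [hidx]

lemma euler {q : ℕ} {u : MvPolynomial (Fin d) ℝ} (hu : u.IsHomogeneous q) :
    (q : ℝ) • u = ∑ i, X i * pderiv i u := by
  conv_lhs => rw [u.as_sum]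
  conv_rhs => rw [u.as_sum]
  rw [Finset.smul_sum]
  have : ∀ i : Fin d, X i * pderiv i (∑ β ∈ u.support, monomial β (coeff β u))
      = ∑ β ∈ u.support, monomial β (coeff β u * β i) := by
    intro i
    rw [map_sum, Finset.mul_sum]
    exact Finset.sum_congr rfl fun β _ => X_mul_pderiv_monomial i β _
  simp only [this]
  rw [Finset.sum_comm]
  refine Finset.sum_congr rfl fun β hβ => ?_
  rw [smul_monomial]
  have : ∑ i : Fin d, monomial β (coeff β u * β i) = monomial β (∑ i, coeff β u * β i) := by
    rw [← map_sum (monomial β)]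
  rw [this, ← Finset.mul_sum]
  have hdeg : β.degree = q := mem_support_degree hu hβ
  rw [finsupp_degree_eq_sum] at hdeg
  have hdeg' : (∑ i, ((β i : ℝ))) = (q : ℝ) := by exact_mod_cast hdeg
  rw [smul_eq_mul, ← hdeg']
  ring

lemma isHomogeneous_pderiv {q : ℕ} {u : MvPolynomial (Fin d) ℝ} (hu : u.IsHomogeneous q)
    (i : Fin d) : (pderiv i u).IsHomogeneous (q - 1) := by
  conv_lhs => rw [u.as_sum]
  rw [map_sum]
  refine IsHomogeneous.sum _ _ _ fun β hβ => ?_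
  rw [pderiv_monomial]
  by_cases h : β i = 0
  · simp only [h, Nat.cast_zero, mul_zero, map_zero]
    exact isHomogeneous_zero _ _ _
  · refine isHomogeneous_monomial _ ?_
    have hdeg := mem_support_degree hu hβ
    rw [finsupp_degree_eq_sum] at hdeg
    rw [finsupp_degree_eq_sum]
    have happ : ∀ j : Fin d, (β - Finsupp.single i (1:ℕ)) j = β j - (if i = j then 1 else 0) := by
      intro j
      rw [Finsupp.tsub_apply, Finsupp.single_apply]
    simp only [happ]
    have hsplit : ∀ f : Fin d → ℕ, ∑ j, f j = f i + ∑ j ∈ Finset.univ.erase i, f j := by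
      intro f
      rw [Finset.add_sum_erase _ f (Finset.mem_univ i)]
    have h2 : ∑ j, (β j - if i = j then 1 else 0) = (∑ j, β j) - 1 := by
      rw [hsplit (fun j => β j - if i = j then 1 else 0), hsplit (fun j => β j)]
      have he : ∑ j ∈ Finset.univ.erase i, (β j - if i = j then 1 else 0)
          = ∑ j ∈ Finset.univ.erase i, β j := by
        refine Finset.sum_congr rfl fun j hj => ?_
        rw [if_neg (Ne.symm (Finset.ne_of_mem_erase hj))]
        omega
      rw [he, if_pos rfl]
      omega
    rw [h2, hdeg]

lemma pderiv_pderiv_comm (i j : Fin d) (u : MvPolynomial (Fin d) ℝ) :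
    pderiv i (pderiv j u) = pderiv j (pderiv i u) := by
  rcases eq_or_ne i j with rfl | hne
  · rfl
  conv_lhs => rw [u.as_sum]
  conv_rhs => rw [u.as_sum]
  rw [map_sum, map_sum, map_sum, map_sum]
  refine Finset.sum_congr rfl fun β _ => ?_
  rw [pderiv_monomial, pderiv_monomial, pderiv_monomial, pderiv_monomial]
  have h1 : (β - Finsupp.single j (1:ℕ)) i = β i := by
    rw [Finsupp.tsub_apply, Finsupp.single_eq_of_ne' (Ne.symm hne)]
    omega
  have h2 : (β - Finsupp.single i (1:ℕ)) j = β j := by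
    rw [Finsupp.tsub_apply, Finsupp.single_eq_of_ne' hne]
    omega
  rw [h1, h2]
  have h3 : β - Finsupp.single j 1 - Finsupp.single i 1
      = β - Finsupp.single i 1 - Finsupp.single j 1 := by
    rw [tsub_tsub, tsub_tsub, add_comm]
  rw [h3]
  ring_nf

noncomputable def lap (u : MvPolynomial (Fin d) ℝ) : MvPolynomial (Fin d) ℝ :=
  ∑ i, pderiv i (pderiv i u)

lemma lap_pderiv (i : Fin d) (u : MvPolynomial (Fin d) ℝ) :
    lap (pderiv i u) = pderiv i (lap u) := by
  unfold lap
  rw [map_sum]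
  refine Finset.sum_congr rfl fun j _ => ?_
  rw [pderiv_pderiv_comm j i u, pderiv_pderiv_comm j i]

lemma eq_C_of_isHomogeneous_zero {u : MvPolynomial (Fin d) ℝ} (hu : u.IsHomogeneous 0) :
    u = C (coeff 0 u) := by
  ext β
  rcases eq_or_ne β 0 with rfl | hβ
  · simp
  · rw [hu.coeff_eq_zero (by rwa [Ne, Finsupp.degree_eq_zero_iff]), coeff_C, if_neg (Ne.symm hβ)]

lemma EE_mul_harmonic {n : ℕ} :
    ∀ q : ℕ, ∀ (g H : MvPolynomial (Fin (n+1)) ℝ) (N : ℕ),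
      g.IsHomogeneous q → H.IsHomogeneous N → lap H = 0 → q < N → EE (g * H) = 0 := by
  intro q
  induction q using Nat.strong_induction_on with
  | _ q ih =>
    intro g H N hg hH hlap hqN
    rcases Nat.eq_zero_or_pos q with hq | hq
    · subst hq
      have hgC := eq_C_of_isHomogeneous_zero hg
      rw [hgC, EE_smul]
      have hN : (N : ℝ) ≠ 0 := by
        exact_mod_cast Nat.pos_iff_ne_zero.mp hqN
      have h1 : (N : ℝ) * EE H = 0 := by
        have : (N : ℝ) * EE H = EE (MvPolynomial.C (N:ℝ) * H) := (EE_smul _ _).symm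
        rw [this, ← smul_eq_C_mul, euler hH, EE_sum]
        have : ∀ i : Fin (n+1), EE (X i * pderiv i H) = EE (pderiv i (pderiv i H)) :=
          fun i => stein i _
        rw [Finset.sum_congr rfl (fun i _ => this i), ← EE_sum]
        rw [show ∑ i, pderiv i (pderiv i H) = lap H from rfl, hlap, EE_zero]
      have : EE H = 0 := by
        rcases mul_eq_zero.mp h1 with h | h
        · exact absurd h hN
        · exact h
      rw [this, mul_zero]
    · have hNq : (q : ℝ) ≠ 0 := by positivity
      have h1 : (q : ℝ) * EE (g * H) = 0 := by
        have e1 : (q : ℝ) * EE (g * H) = EE (MvPolynomial.C (q:ℝ) * (g * H)) :=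
          (EE_smul _ _).symm
        rw [e1, ← smul_eq_C_mul]
        have e2 : (q : ℝ) • (g * H) = ∑ i, X i * (pderiv i g * H) := by
          calc (q : ℝ) • (g * H) = ((q : ℝ) • g) * H := by rw [smul_mul_assoc]
          _ = (∑ i, X i * pderiv i g) * H := by rw [euler hg]
          _ = ∑ i, X i * (pderiv i g * H) := by rw [Finset.sum_mul]; simp [mul_assoc]
        rw [e2, EE_sum]
        have e3 : ∀ i : Fin (n+1), EE (X i * (pderiv i g * H))
            = EE (pderiv i (pderiv i g) * H) + EE (pderiv i g * pderiv i H) := by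
          intro i
          rw [stein i _, pderiv_mul, EE_add]
        rw [Finset.sum_congr rfl (fun i _ => e3 i), Finset.sum_add_distrib]
        have z1 : ∀ i : Fin (n+1), EE (pderiv i (pderiv i g) * H) = 0 := by
          intro i
          refine ih (q - 1 - 1) (by omega) _ _ N
            (isHomogeneous_pderiv (isHomogeneous_pderiv hg i) i) hH hlap (by omega)
        have z2 : ∀ i : Fin (n+1), EE (pderiv i g * pderiv i H) = 0 := by
          intro i
          refine ih (q - 1) (by omega) _ _ (N - 1)
            (isHomogeneous_pderiv hg i) (isHomogeneous_pderiv hH i) ?_ (by omega)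
          rw [lap_pderiv, hlap, map_zero]
        rw [Finset.sum_congr rfl (fun i _ => z1 i), Finset.sum_congr rfl (fun i _ => z2 i)]
        simp
      rcases mul_eq_zero.mp h1 with h | h
      · exact absurd h hNq
      · exact h

end BC
namespace BC

open MvPolynomial

variable {d : ℕ}

lemma continuous_eval (f : MvPolynomial (Fin d) ℝ) :
    Continuous fun x : Fin d → ℝ => eval x f := by
  induction f using MvPolynomial.induction_on with
  | C a => simp only [eval_C]; exact continuous_const
  | add p q hp hq => simp only [map_add]; exact hp.add hq
  | mul_X p j hp => simp only [map_mul, eval_X]; exact hp.mul (continuous_apply j)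

lemma exists_eval_ne {f : MvPolynomial (Fin d) ℝ} (hf : f ≠ 0) :
    ∃ x : Fin d → ℝ, eval x f ≠ 0 := by
  by_contra hall
  push_neg at hall
  exact hf (MvPolynomial.funext (fun x => by rw [hall x, map_zero]))

lemma EE_pos {f : MvPolynomial (Fin d) ℝ} (hf : f ≠ 0) (hnn : ∀ x, 0 ≤ eval x f) :
    0 < EE f := by
  have hgw : ∀ x : Fin d → ℝ, 0 < gwD x := fun x => Finset.prod_pos (fun i _ => gw_pos _)
  have hint := integrable_eval_mul_gwD f
  have hnn' : (0 : (Fin d → ℝ) → ℝ) ≤ fun x => eval x f * gwD x :=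
    fun x => mul_nonneg (hnn x) (hgw x).le
  unfold EE
  rw [MeasureTheory.integral_pos_iff_support_of_nonneg hnn' hint]
  obtain ⟨x₀, hx₀⟩ := exists_eval_ne hf
  have hx₀' : 0 < eval x₀ f := lt_of_le_of_ne (hnn x₀) (Ne.symm hx₀)
  have hUopen : IsOpen {x : Fin d → ℝ | 0 < eval x f} :=
    isOpen_lt continuous_const (continuous_eval f)
  have hsub : {x : Fin d → ℝ | 0 < eval x f}
      ⊆ Function.support (fun x => eval x f * gwD x) := by
    intro x hx
    exact ne_of_gt (mul_pos hx (hgw x))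
  calc (0 : ENNReal) < MeasureTheory.volume {x : Fin d → ℝ | 0 < eval x f} :=
        hUopen.measure_pos _ ⟨x₀, hx₀'⟩
  _ ≤ _ := MeasureTheory.measure_mono hsub

lemma finsupp_degree_eq_sum' (β : Fin d →₀ ℕ) : (β.sum fun _ e => e) = β.degree := by
  rfl

lemma coeff_eq_zero_of_totalDegree_lt {p : MvPolynomial (Fin d) ℝ} {β : Fin d →₀ ℕ}
    (h : p.totalDegree < β.degree) : coeff β p = 0 := by
  by_contra hc
  have := le_totalDegree (p := p) (s := β) (mem_support_iff.mpr hc)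
  rw [finsupp_degree_eq_sum'] at this
  omega

lemma hc_top_ne_zero {p : MvPolynomial (Fin d) ℝ} (hp : p ≠ 0) :
    homogeneousComponent p.totalDegree p ≠ 0 := by
  obtain ⟨β, hβ, hdeg⟩ := Finset.exists_mem_eq_sup p.support
    (support_nonempty.mpr hp) (fun s => s.sum fun _ e => e)
  intro h
  have hcoeff : coeff β (homogeneousComponent p.totalDegree p) = coeff β p := by
    rw [coeff_homogeneousComponent, if_pos (by rw [← finsupp_degree_eq_sum', ← hdeg]; rfl)]
  rw [h, coeff_zero] at hcoeff
  exact (mem_support_iff.mp hβ) hcoeff.symm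

lemma hc_top_mul (P Q : MvPolynomial (Fin d) ℝ) :
    homogeneousComponent (P.totalDegree + Q.totalDegree) (P * Q)
      = homogeneousComponent P.totalDegree P * homogeneousComponent Q.totalDegree Q := by
  set m := P.totalDegree
  set q := Q.totalDegree
  have hmul : ((homogeneousComponent m P) * (homogeneousComponent q Q)).IsHomogeneous (m + q) :=
    (homogeneousComponent_isHomogeneous m P).mul (homogeneousComponent_isHomogeneous q Q)
  ext β
  rw [coeff_homogeneousComponent]
  by_cases hβ : β.degree = m + q
  · rw [if_pos hβ, coeff_mul, coeff_mul]
    refine Finset.sum_congr rfl fun z hz => ?_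
    rw [Finset.HasAntidiagonal.mem_antidiagonal] at hz
    have hdeg : z.1.degree + z.2.degree = m + q := by
      have hadd : (z.1 + z.2).degree = z.1.degree + z.2.degree := by
        rw [finsupp_degree_eq_sum, finsupp_degree_eq_sum, finsupp_degree_eq_sum,
          ← Finset.sum_add_distrib]
        exact Finset.sum_congr rfl fun i _ => Finsupp.add_apply _ _ _
      rw [← hadd, hz, hβ]
    by_cases h1 : z.1.degree = m
    · have h2 : z.2.degree = q := by omega
      rw [coeff_homogeneousComponent, coeff_homogeneousComponent, if_pos h1, if_pos h2]
    · rcases Nat.lt_or_ge z.1.degree m with hlt | hge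
      · have h2 : q < z.2.degree := by omega
        rw [coeff_eq_zero_of_totalDegree_lt h2,
          coeff_homogeneousComponent (n := q), if_neg (by omega), mul_zero, mul_zero]
      · have h1' : m < z.1.degree := by omega
        rw [coeff_eq_zero_of_totalDegree_lt h1',
          coeff_homogeneousComponent (n := m), if_neg (by omega), zero_mul, zero_mul]
  · rw [if_neg hβ, hmul.coeff_eq_zero hβ]

lemma homog_eval_smul {k : ℕ} {u : MvPolynomial (Fin d) ℝ} (hu : u.IsHomogeneous k)
    (t : ℝ) (x : Fin d → ℝ) :
    eval (fun j => t * x j) u = t ^ k * eval x u := by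
  conv_lhs => rw [u.as_sum]
  conv_rhs => rw [u.as_sum]
  rw [map_sum, map_sum, Finset.mul_sum]
  refine Finset.sum_congr rfl fun β hβ => ?_
  rw [eval_monomial, eval_monomial]
  have : (β.prod fun j e => (t * x j) ^ e)
      = t ^ β.degree * β.prod fun j e => x j ^ e := by
    unfold Finsupp.prod
    rw [Finsupp.degree_apply, ← Finset.prod_pow_eq_pow_sum, ← Finset.prod_mul_distrib]
    exact Finset.prod_congr rfl fun j _ => (mul_pow _ _ _)
  rw [this, mem_support_degree hu hβ]
  ring

lemma eq_C_of_totalDegree_zero {p : MvPolynomial (Fin d) ℝ} (h : p.totalDegree = 0) :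
    p = C (coeff 0 p) := by
  refine eq_C_of_isHomogeneous_zero ?_
  rw [← totalDegree_zero_iff_isHomogeneous]
  exact h

/-- substitution X j ↦ C (x j) * X, to analyze behaviour along rays -/
noncomputable def psi (x : Fin d → ℝ) : MvPolynomial (Fin d) ℝ →ₐ[ℝ] Polynomial ℝ :=
  aeval (fun j => Polynomial.C (x j) * Polynomial.X)

lemma psi_eval (x : Fin d → ℝ) (f : MvPolynomial (Fin d) ℝ) (t : ℝ) :
    (psi x f).eval t = eval (fun j => t * x j) f := by
  induction f using MvPolynomial.induction_on with
  | C a => simp [psi]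
  | add p q hp hq => simp [map_add, hp, hq]
  | mul_X p j hp =>
    rw [map_mul, map_mul, Polynomial.eval_mul, hp]
    have hXj : (psi x) (X j) = Polynomial.C (x j) * Polynomial.X := by simp [psi]
    rw [hXj, Polynomial.eval_mul, Polynomial.eval_C, Polynomial.eval_X, eval_X]
    ring

lemma psi_homog {k : ℕ} {u : MvPolynomial (Fin d) ℝ} (hu : u.IsHomogeneous k)
    (x : Fin d → ℝ) :
    psi x u = Polynomial.C (eval x u) * Polynomial.X ^ k := by
  have key : ∀ t : ℝ, (psi x u).eval t = (Polynomial.C (eval x u) * Polynomial.X ^ k).eval t := by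
    intro t
    rw [psi_eval, homog_eval_smul hu t x]
    simp
    ring
  exact Polynomial.funext key

lemma psi_coeff (x : Fin d → ℝ) (f : MvPolynomial (Fin d) ℝ) (k : ℕ) :
    (psi x f).coeff k = eval x (homogeneousComponent k f) := by
  conv_lhs => rw [← sum_homogeneousComponent f]
  rw [map_sum]
  have : ∀ j ∈ Finset.range (f.totalDegree + 1),
      (psi x (homogeneousComponent j f)).coeff k
        = if j = k then eval x (homogeneousComponent j f) else 0 := by
    intro j _
    rw [psi_homog (homogeneousComponent_isHomogeneous j f) x]
    rcases eq_or_ne j k with rfl | hne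
    · rw [Polynomial.coeff_C_mul, Polynomial.coeff_X_pow, if_pos rfl, mul_one, if_pos rfl]
    · rw [Polynomial.coeff_C_mul, Polynomial.coeff_X_pow, if_neg (by omega), mul_zero,
        if_neg hne]
  rw [Polynomial.finset_sum_coeff, Finset.sum_congr rfl this]
  by_cases hk : k ≤ f.totalDegree
  · rw [Finset.sum_ite_eq' (Finset.range (f.totalDegree + 1)) k
        (fun j => eval x (homogeneousComponent j f)),
      if_pos (Finset.mem_range.mpr (by omega))]
  · rw [Finset.sum_ite_eq' (Finset.range (f.totalDegree + 1)) k
        (fun j => eval x (homogeneousComponent j f)),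
      if_neg (by simp; omega)]
    rw [homogeneousComponent_eq_zero _ f (by omega), map_zero]

lemma nonneg_top {P : MvPolynomial (Fin d) ℝ} (hnn : ∀ x, 0 ≤ eval x P)
    (hm : 1 ≤ P.totalDegree) :
    ∀ x, 0 ≤ eval x (homogeneousComponent P.totalDegree P) := by
  intro x
  by_contra hneg
  push_neg at hneg
  set r := psi x P with hr
  have hcoef : r.coeff P.totalDegree = eval x (homogeneousComponent P.totalDegree P) :=
    psi_coeff x P _
  have hr0 : r ≠ 0 := fun h => by
    rw [h, Polynomial.coeff_zero] at hcoef
    exact absurd hcoef.symm (ne_of_lt hneg)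
  have hle : r.natDegree ≤ P.totalDegree := by
    rw [Polynomial.natDegree_le_iff_coeff_eq_zero]
    intro N hN
    rw [psi_coeff, homogeneousComponent_eq_zero _ P hN, map_zero]
  have hge : P.totalDegree ≤ r.natDegree :=
    Polynomial.le_natDegree_of_ne_zero (by rw [hcoef]; exact ne_of_lt hneg)
  have hnat : r.natDegree = P.totalDegree := le_antisymm hle hge
  have hlead : r.leadingCoeff ≤ 0 := by
    unfold Polynomial.leadingCoeff
    rw [hnat, hcoef]
    exact hneg.le
  have hdegpos : 0 < r.degree := by
    rw [← Polynomial.natDegree_pos_iff_degree_pos, hnat]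
    omega
  have htend := Polynomial.tendsto_atBot_of_leadingCoeff_nonpos r hdegpos hlead
  obtain ⟨t, ht⟩ := (htend.eventually (Filter.eventually_lt_atBot (0:ℝ))).exists
  have := hnn (fun j => t * x j)
  rw [← psi_eval] at this
  exact absurd (lt_of_le_of_lt this ht) (lt_irrefl _)

lemma even_of_nonneg_homog {k : ℕ} {u : MvPolynomial (Fin d) ℝ} (hu : u.IsHomogeneous k)
    (h0 : u ≠ 0) (hnn : ∀ x, 0 ≤ eval x u) : Even k := by
  by_contra hodd
  rw [Nat.not_even_iff_odd] at hodd
  obtain ⟨x, hx⟩ := exists_eval_ne h0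
  have hpos : 0 < eval x u := lt_of_le_of_ne (hnn x) (Ne.symm hx)
  have := homog_eval_smul hu (-1) x
  rw [hodd.neg_one_pow] at this
  have h2 := hnn (fun j => (-1) * x j)
  rw [this] at h2
  linarith

lemma pderiv_of_isHomogeneous_zero {u : MvPolynomial (Fin d) ℝ} (hu : u.IsHomogeneous 0)
    (i : Fin d) : pderiv i u = 0 := by
  rw [eq_C_of_isHomogeneous_zero hu, pderiv_C]

lemma lap_sum {ι : Type*} (s : Finset ι) (f : ι → MvPolynomial (Fin d) ℝ) :
    lap (∑ i ∈ s, f i) = ∑ i ∈ s, lap (f i) := by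
  unfold lap
  rw [Finset.sum_comm]
  exact Finset.sum_congr rfl fun i _ => by rw [map_sum, map_sum]

lemma isHomogeneous_lap {k : ℕ} {u : MvPolynomial (Fin d) ℝ} (hu : u.IsHomogeneous k) :
    (lap u).IsHomogeneous (k - 2) := by
  unfold lap
  refine IsHomogeneous.sum _ _ _ fun i _ => ?_
  have := isHomogeneous_pderiv (isHomogeneous_pderiv hu i) i
  rwa [Nat.sub_sub] at this

lemma lap_hc_top {H : MvPolynomial (Fin d) ℝ} (hlap : lap H = 0) {n0 : ℕ} (h2 : 2 ≤ n0) :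
    lap (homogeneousComponent n0 H) = 0 := by
  by_cases hle : n0 ≤ H.totalDegree
  swap
  · rw [homogeneousComponent_eq_zero _ H (by omega)]
    unfold lap
    simp
  have hzero : (0 : MvPolynomial (Fin d) ℝ)
      = ∑ k ∈ Finset.range (H.totalDegree + 1),
          homogeneousComponent (n0 - 2) (lap (homogeneousComponent k H)) := by
    rw [← map_sum (homogeneousComponent (n0 - 2)), ← lap_sum, sum_homogeneousComponent,
      hlap, map_zero]
  have hterm : ∀ k ∈ Finset.range (H.totalDegree + 1), k ≠ n0 →
      homogeneousComponent (n0 - 2) (lap (homogeneousComponent k H)) = 0 := by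
    intro k _ hk
    rcases Nat.lt_or_ge k 2 with hk2 | hk2
    · have : lap (homogeneousComponent k H) = 0 := by
        unfold lap
        refine Finset.sum_eq_zero fun i _ => ?_
        interval_cases k
        · rw [homogeneousComponent_zero, pderiv_C, map_zero]
        · rw [pderiv_of_isHomogeneous_zero
            (by simpa using isHomogeneous_pderiv (homogeneousComponent_isHomogeneous 1 H) i) i]
      rw [this, map_zero]
    · have hhom := isHomogeneous_lap (homogeneousComponent_isHomogeneous k H)
      rw [homogeneousComponent_of_mem (mem_homogeneousSubmodule _ _ |>.mpr hhom),
        if_neg (by omega)]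
  have := hzero
  rw [Finset.sum_eq_single n0 hterm (fun h => absurd (Finset.mem_range.mpr (by omega)) h)]
    at this
  have hhomn0 := isHomogeneous_lap (homogeneousComponent_isHomogeneous n0 H)
  rw [homogeneousComponent_of_mem (mem_homogeneousSubmodule _ _ |>.mpr hhomn0), if_pos rfl]
    at this
  exact this.symm

end BC

open MvPolynomial

/-- Brelot–Choquet: a nonnegative nonconstant real polynomial does not divide a
nonzero harmonic polynomial. -/
theorem stmt_3 (d : ℕ) (H P : MvPolynomial (Fin d) ℝ) (hH : H ≠ 0)
    (hharm : (∑ i : Fin d, pderiv i (pderiv i H)) = 0)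
    (hPnonneg : ∀ x : Fin d → ℝ, 0 ≤ eval x P)
    (hPnonconst : ∀ c : ℝ, P ≠ C c) :
    ¬ (P ∣ H) := by
  cases d with
  | zero =>
    intro _
    exact hPnonconst _ (MvPolynomial.eq_C_of_isEmpty P)
  | succ e =>
    rintro ⟨Q, rfl⟩
    have hP0 : P ≠ 0 := fun h => hPnonconst 0 (by rw [h, map_zero])
    have hQ0 : Q ≠ 0 := fun h => hH (by rw [h, mul_zero])
    set m := P.totalDegree with hm
    set q := Q.totalDegree with hq
    have hm1 : 1 ≤ m := by
      by_contra h
      refine hPnonconst _ (BC.eq_C_of_totalDegree_zero ?_)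
      rw [← hm]
      omega
    set Pm := homogeneousComponent m P with hPm
    set Qq := homogeneousComponent q Q with hQq
    have hPm0 : Pm ≠ 0 := BC.hc_top_ne_zero hP0
    have hQq0 : Qq ≠ 0 := BC.hc_top_ne_zero hQ0
    have htop : homogeneousComponent (m + q) (P * Q) = Pm * Qq := BC.hc_top_mul P Q
    have hPmnn : ∀ x, 0 ≤ eval x Pm := BC.nonneg_top hPnonneg hm1
    have hmeven : Even m :=
      BC.even_of_nonneg_homog (homogeneousComponent_isHomogeneous m P) hPm0 hPmnn
    have hm2 : 2 ≤ m := by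
      rcases hmeven with ⟨j, hj⟩
      omega
    have hlapH : BC.lap (P * Q) = 0 := hharm
    have hlaptop : BC.lap (homogeneousComponent (m + q) (P * Q)) = 0 :=
      BC.lap_hc_top hlapH (by omega)
    rw [htop] at hlaptop
    have hhomPQ : (Pm * Qq).IsHomogeneous (m + q) := by
      rw [← htop]
      exact homogeneousComponent_isHomogeneous (m + q) (P * Q)
    have hEzero : EE (Qq * (Pm * Qq)) = 0 :=
      BC.EE_mul_harmonic q Qq (Pm * Qq) (m + q) (homogeneousComponent_isHomogeneous q Q)
        hhomPQ hlaptop (by omega)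
    have hprod : Qq * (Pm * Qq) = Pm * (Qq * Qq) := by ring
    have hpos : 0 < EE (Qq * (Pm * Qq)) := by
      refine BC.EE_pos ?_ ?_
      · rw [hprod]
        exact mul_ne_zero hPm0 (mul_ne_zero hQq0 hQq0)
      · intro x
        rw [hprod, map_mul, map_mul]
        exact mul_nonneg (hPmnn x) (mul_self_nonneg _)
    linarith
end

section
/- Let $C_1,\dots,C_P$ be sets in $\mathbb{R}^3$ with pairwise distinct designated points (vertices) $b_1,\dots,b_P$, $b_i\in C_i$, such that for all $i\ne j$ the intersection $C_i\cap C_j$ is a single point equal to either $b_i$ or $b_j$. Then $P\le 3$. -/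
/-!
Orient the pair `{i, j}` from `i` to `j` when `b i ∈ C j`. Every pair is oriented at least one way,
and no vertex `b i` lies in two sets other than its own, since two such sets meet only in their own
vertices: every index has at most one out-neighbour. Then it also has at most one in-neighbour,
because two in-neighbours of the same index would have nowhere to point to each other. A point of
a four-element index set would thus be joined to at most two of the other three.
-/

section Orientation

variable {ι : Type*} {R : ι → ι → Prop}
  (htotal : ∀ i j, i ≠ j → R i j ∨ R j i)
  (hout : ∀ i j k, i ≠ j → i ≠ k → R i j → R i k → j = k)
include htotal hout

theorem rel_of_rel_of_ne {a b c : ι} (hab : a ≠ b) (hac : a ≠ c) (hbc : b ≠ c) (h : R a b) :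
    R c a :=
  (htotal a c hac).resolve_left fun h' => hbc (hout a b c hab hac h h')

theorem not_rel_and_rel {a b c : ι} (hab : a ≠ b) (hac : a ≠ c) (hbc : b ≠ c) :
    ¬(R b a ∧ R c a) := by
  rintro ⟨hba, hca⟩
  rcases htotal b c hbc with hbc' | hcb
  · exact hac (hout b a c hab.symm hbc hba hbc')
  · exact hab (hout c a b hac.symm hbc.symm hca hcb)

theorem false_of_four {a b c d : ι} (hab : a ≠ b) (hac : a ≠ c) (had : a ≠ d) (hbc : b ≠ c)
    (hbd : b ≠ d) (hcd : c ≠ d) : False := by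
  rcases htotal a b hab with h | hba
  · exact not_rel_and_rel htotal hout hac had hcd
      ⟨rel_of_rel_of_ne htotal hout hab hac hbc h, rel_of_rel_of_ne htotal hout hab had hbd h⟩
  rcases htotal a c hac with h | hca
  · exact not_rel_and_rel htotal hout hab had hbd ⟨hba, rel_of_rel_of_ne htotal hout hac had hcd h⟩
  · exact not_rel_and_rel htotal hout hab hac hbc ⟨hba, hca⟩

theorem card_le_three_of_total_of_out_unique [Fintype ι] : Fintype.card ι ≤ 3 := by
  by_contra! h
  obtain ⟨f⟩ := Function.Embedding.nonempty_of_card_le (show Fintype.card (Fin 4) ≤ _ from h)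
  have hf : ∀ m n : Fin 4, m ≠ n → f m ≠ f n := fun m n => f.injective.ne
  exact false_of_four htotal hout (hf 0 1 (by decide)) (hf 0 2 (by decide)) (hf 0 3 (by decide))
    (hf 1 2 (by decide)) (hf 1 3 (by decide)) (hf 2 3 (by decide))

end Orientation

section VertexSets

variable {α ι : Type*} {C : ι → Set α} {b : ι → α}
  (hinter : ∀ i j, i ≠ j → C i ∩ C j = {b i} ∨ C i ∩ C j = {b j})
include hinter

theorem mem_or_mem_of_ne {i j : ι} (hij : i ≠ j) :
    b i ∈ C j ∨ b j ∈ C i := by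
  rcases hinter i j hij with h | h
  · exact .inl (h.symm.subset rfl).2
  · exact .inr (h.symm.subset rfl).1

theorem eq_of_vertex_mem_of_mem (hb : Function.Injective b) {i j k : ι} (hij : i ≠ j)
    (hik : i ≠ k) (hj : b i ∈ C j) (hk : b i ∈ C k) : j = k := by
  by_contra hjk
  rcases hinter j k hjk with h | h
  · exact hij (hb (h.subset ⟨hj, hk⟩))
  · exact hik (hb (h.subset ⟨hj, hk⟩))

end VertexSets

theorem stmt_15_general (P : ℕ) (C : Fin P → Set (EuclideanSpace ℝ (Fin 3)))
    (b : Fin P → EuclideanSpace ℝ (Fin 3)) (hb : Function.Injective b)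
    (hinter : ∀ i j, i ≠ j → C i ∩ C j = {b i} ∨ C i ∩ C j = {b j}) :
    P ≤ 3 := by
  simpa using card_le_three_of_total_of_out_unique (R := fun i j => b i ∈ C j)
    (fun _ _ => mem_or_mem_of_ne hinter)
    (fun _ _ _ => eq_of_vertex_mem_of_mem hinter hb)

/-- A family of sets with pairwise distinct designated vertices, whose pairwise
intersections are each a single point equal to one of the two vertices involved,
has at most 3 members. -/
theorem stmt_15 (P : ℕ) (C : Fin P → Set (EuclideanSpace ℝ (Fin 3)))
    (b : Fin P → EuclideanSpace ℝ (Fin 3)) (hb : Function.Injective b)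
    (hmem : ∀ i, b i ∈ C i)
    (hinter : ∀ i j, i ≠ j → C i ∩ C j = {b i} ∨ C i ∩ C j = {b j}) :
    P ≤ 3 :=
  stmt_15_general P C b hb hinter
end
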